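/- Let X⋆ ∈ ℝ^{I₁×I₂×I₃} have tubal rank R with skinny t-SVD X⋆ = U⋆*Σ⋆*V⋆ᵀ, let 0 < ε < 1 and 0 < τ ≤ 1, let L_{k+1} ∈ ℝ^{I₁×R×I₃}, R_{k+1} ∈ ℝ^{I₂×R×I₃}, let Q_k ∈ GL(R), and let Q_{k+1} be an optimal alignment tensor between (L_{k+1},R_{k+1}) and (L⋆,R⋆). Suppose that for both Q = Q_k and Q = Q_{k+1} one has ‖(L_{k+1}*Q − L⋆)*Σ⋆^{1/2}‖₂ ∨ ‖(R_{k+1}*Q^{−ᵀ} − R⋆)*Σ⋆^{1/2}‖₂ ≤ ε·τ^{k+1}·σ_min(X⋆). Then ‖Σ⋆^{1/2}*Q_k⁻¹*(Q_{k+1} − Q_k)*Σ⋆^{1/2}‖₂ ∨ ‖Σ⋆^{1/2}*Q_kᵀ*(Q_{k+1}^{−ᵀ} − Q_k^{−ᵀ})*Σ⋆^{1/2}‖₂ ≤ (2ε/(1 − ε))·σ_min(X⋆). -/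

import Mathlib

open scoped BigOperators
open Matrix

/-- An order-3 real tensor. -/
abbrev Tensor (I₁ I₂ I₃ : ℕ) := Fin I₁ → Fin I₂ → Fin I₃ → ℝ

namespace RTPCA

variable {I₁ I₂ I₃ J R : ℕ}

/-- The t-product, computed by circular convolution along the third mode
(equivalently, slice-wise products in the Fourier domain). -/
noncomputable def tprod (A : Tensor I₁ I₂ I₃) (B : Tensor I₂ J I₃) : Tensor I₁ J I₃ :=
  fun i j k => ∑ l : Fin I₂, ∑ t : Fin I₃, A i l t * B l j (k - t)

/-- The tensor transpose: transpose each frontal slice and reverse the order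
of the frontal slices 2 through I₃. -/
def tT (A : Tensor I₁ I₂ I₃) : Tensor I₂ I₁ I₃ :=
  fun j i k => A i j (-k)

/-- The identity tensor: first frontal slice is the identity, the rest are zero. -/
def idT (R I₃ : ℕ) : Tensor R R I₃ :=
  fun i j k => if i = j ∧ (k : ℕ) = 0 then 1 else 0

/-- Discrete Fourier transform along the third mode. -/
noncomputable def dft (A : Tensor I₁ I₂ I₃) (i : Fin I₁) (j : Fin I₂) (k : Fin I₃) : ℂ :=
  ∑ t : Fin I₃, (A i j t : ℂ) *
    Complex.exp (-(2 * Real.pi * Complex.I * (k.val : ℂ) * (t.val : ℂ)) / (I₃ : ℂ))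

/-- Fourier-domain frontal slice. -/
noncomputable def fSlice (A : Tensor I₁ I₂ I₃) (k : Fin I₃) : Matrix (Fin I₁) (Fin I₂) ℂ :=
  Matrix.of fun i j => dft A i j k

/-- Inverse DFT along the third mode (real part). -/
noncomputable def invDft (F : Fin I₁ → Fin I₂ → Fin I₃ → ℂ) : Tensor I₁ I₂ I₃ :=
  fun i j t =>
    ((∑ k : Fin I₃, F i j k *
      Complex.exp ((2 * Real.pi * Complex.I * (k.val : ℂ) * (t.val : ℂ)) / (I₃ : ℂ))) / (I₃ : ℂ)).re

/-- Squared Frobenius norm. -/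
noncomputable def fro2 (A : Tensor I₁ I₂ I₃) : ℝ := ∑ i, ∑ j, ∑ k, (A i j k) ^ 2

/-- Frobenius norm. -/
noncomputable def froNorm (A : Tensor I₁ I₂ I₃) : ℝ := Real.sqrt (fro2 A)

/-- Entrywise sup norm ‖A‖_∞. -/
noncomputable def infNorm (A : Tensor I₁ I₂ I₃) : ℝ := ⨆ i, ⨆ j, ⨆ k, |A i j k|

/-- ℓ_{2,∞} norm: largest ℓ₂ norm of a horizontal slice. -/
noncomputable def twoInfNorm (A : Tensor I₁ I₂ I₃) : ℝ :=
  ⨆ i, Real.sqrt (∑ j, ∑ k, (A i j k) ^ 2)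

/-- ℓ_{1,∞} norm: largest ℓ₁ norm of a horizontal slice. -/
noncomputable def oneInfNorm (A : Tensor I₁ I₂ I₃) : ℝ := ⨆ i, ∑ j, ∑ k, |A i j k|

/-- Spectral norm (largest singular value) of a complex matrix. -/
noncomputable def matSpecNorm {m n : ℕ} (M : Matrix (Fin m) (Fin n) ℂ) : ℝ :=
  ‖LinearMap.toContinuousLinearMap (Matrix.toEuclideanLin M)‖

/-- Tensor spectral norm = tensor operator norm: the largest singular value of
the Fourier-domain frontal slices. -/
noncomputable def specNorm (A : Tensor I₁ I₂ I₃) : ℝ :=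
  ⨆ k : Fin I₃, matSpecNorm (fSlice A k)

/-- f-diagonal in the Fourier domain with strictly positive diagonal entries. -/
def FDiagPos (S : Tensor R R I₃) : Prop :=
  (∀ k, ∀ i j : Fin R, i ≠ j → fSlice S k i j = 0) ∧
  (∀ k, ∀ i : Fin R, 0 < (fSlice S k i i).re ∧ (fSlice S k i i).im = 0)

/-- f-diagonal in the Fourier domain with nonnegative diagonal entries. -/
def FDiagNonneg (S : Tensor R R I₃) : Prop :=
  (∀ k, ∀ i j : Fin R, i ≠ j → fSlice S k i j = 0) ∧
  (∀ k, ∀ i : Fin R, 0 ≤ (fSlice S k i i).re ∧ (fSlice S k i i).im = 0)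

/-- Skinny t-SVD with tubal rank R (strictly positive Fourier-domain diagonal). -/
structure IsSkinnyTSVD (X : Tensor I₁ I₂ I₃) (U : Tensor I₁ R I₃)
    (S : Tensor R R I₃) (V : Tensor I₂ R I₃) : Prop where
  decomp : X = tprod (tprod U S) (tT V)
  orthU : tprod (tT U) U = idT R I₃
  orthV : tprod (tT V) V = idT R I₃
  diag : FDiagPos S

/-- Skinny t-SVD with tubal rank at most R (nonnegative diagonal allowed). -/
structure IsSkinnyTSVDLe (X : Tensor I₁ I₂ I₃) (U : Tensor I₁ R I₃)
    (S : Tensor R R I₃) (V : Tensor I₂ R I₃) : Prop where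
  decomp : X = tprod (tprod U S) (tT V)
  orthU : tprod (tT U) U = idT R I₃
  orthV : tprod (tT V) V = idT R I₃
  diag : FDiagNonneg S

/-- σ_min: the smallest Fourier-domain diagonal entry of Σ. -/
noncomputable def sigmaMin (S : Tensor R R I₃) : ℝ :=
  ⨅ k : Fin I₃, ⨅ i : Fin R, (fSlice S k i i).re

/-- σ_max (= σ₁): the largest Fourier-domain diagonal entry of Σ. -/
noncomputable def sigmaMax (S : Tensor R R I₃) : ℝ :=
  ⨆ k : Fin I₃, ⨆ i : Fin R, (fSlice S k i i).re

/-- Condition number κ = σ_max / σ_min. -/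
noncomputable def condNum (S : Tensor R R I₃) : ℝ := sigmaMax S / sigmaMin S

/-- Σ^{1/2}: entrywise square roots in the Fourier domain. -/
noncomputable def sqrtT (S : Tensor R R I₃) : Tensor R R I₃ :=
  invDft fun i j k => (Real.sqrt ((dft S i j k).re) : ℂ)

/-- Σ^{-1/2}: entrywise reciprocal square roots in the Fourier domain. -/
noncomputable def invSqrtT (S : Tensor R R I₃) : Tensor R R I₃ :=
  invDft fun i j k => (((Real.sqrt ((dft S i j k).re))⁻¹ : ℝ) : ℂ)

/-- `Qi` is a two-sided t-product inverse of `Q` (i.e. `Q ∈ GL(R)`). -/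
def TInv (Q Qi : Tensor R R I₃) : Prop :=
  tprod Q Qi = idT R I₃ ∧ tprod Qi Q = idT R I₃

/-- Alignment error (the quantity inside the infimum defining `distT`)
for a given invertible Q with inverse Qi. -/
noncomputable def alignErr (L Ls : Tensor I₁ R I₃) (Rt Rs : Tensor I₂ R I₃)
    (Sh : Tensor R R I₃) (Q Qi : Tensor R R I₃) : ℝ :=
  Real.sqrt ((froNorm (tprod (tprod L Q - Ls) Sh)) ^ 2 +
    (froNorm (tprod (tprod Rt (tT Qi) - Rs) Sh)) ^ 2)

/-- The distance metric dist(L,R;L⋆,R⋆): the infimum of alignment errors over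
invertible tensors Q, where `Sh` is Σ⋆^{1/2}. -/
noncomputable def distT (L Ls : Tensor I₁ R I₃) (Rt Rs : Tensor I₂ R I₃)
    (Sh : Tensor R R I₃) : ℝ :=
  sInf {d : ℝ | ∃ Q Qi : Tensor R R I₃, TInv Q Qi ∧ d = alignErr L Ls Rt Rs Sh Q Qi}

/-- Q (with inverse Qi) is an optimal alignment tensor: it attains the infimum
defining the distance metric. -/
def IsOptAlign (L Ls : Tensor I₁ R I₃) (Rt Rs : Tensor I₂ R I₃)
    (Sh : Tensor R R I₃) (Q Qi : Tensor R R I₃) : Prop :=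
  TInv Q Qi ∧ alignErr L Ls Rt Rs Sh Q Qi = distT L Ls Rt Rs Sh

/-- Entrywise soft-thresholding. -/
noncomputable def softThresh (ζ : ℝ) (A : Tensor I₁ I₂ I₃) : Tensor I₁ I₂ I₃ :=
  fun i j k => Real.sign (A i j k) * max 0 (|A i j k| - ζ)

/-- Support: the set of index triples at which the tensor is nonzero. -/
def supp (A : Tensor I₁ I₂ I₃) : Set (Fin I₁ × Fin I₂ × Fin I₃) :=
  {p | A p.1 p.2.1 p.2.2 ≠ 0}

/-- α-sparsity: every horizontal, lateral and frontal slice has at most an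
α fraction of nonzero entries. -/
def IsSparse (α : ℝ) (S : Tensor I₁ I₂ I₃) : Prop :=
  (∀ i₁ : Fin I₁, ({p : Fin I₂ × Fin I₃ | S i₁ p.1 p.2 ≠ 0}.ncard : ℝ) ≤ α * I₂ * I₃) ∧
  (∀ i₂ : Fin I₂, ({p : Fin I₁ × Fin I₃ | S p.1 i₂ p.2 ≠ 0}.ncard : ℝ) ≤ α * I₁ * I₃) ∧
  (∀ i₃ : Fin I₃, ({p : Fin I₁ × Fin I₂ | S p.1 p.2 i₃ ≠ 0}.ncard : ℝ) ≤ α * I₁ * I₂)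

/-- Tensor μ-incoherence conditions for the skinny t-SVD factors U, V. -/
def Incoherent (μ : ℝ) (U : Tensor I₁ R I₃) (V : Tensor I₂ R I₃) : Prop :=
  twoInfNorm U ≤ Real.sqrt (μ * R / I₁) ∧ twoInfNorm V ≤ Real.sqrt (μ * R / I₂)

/-- Top-R truncated t-SVD of A: a skinny t-SVD-shaped factorization which, in
every Fourier-domain frontal slice, keeps R largest singular values together
with their singular vectors (the residual is orthogonal to the kept singular
vectors and its spectral norm is at most every kept singular value). -/
structure IsTruncTSVD (A : Tensor I₁ I₂ I₃) (U : Tensor I₁ R I₃)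
    (S : Tensor R R I₃) (V : Tensor I₂ R I₃) : Prop where
  orthU : tprod (tT U) U = idT R I₃
  orthV : tprod (tT V) V = idT R I₃
  diag : FDiagNonneg S
  leftOrth : ∀ k, (fSlice U k)ᴴ * (fSlice A k - fSlice (tprod (tprod U S) (tT V)) k) = 0
  rightOrth : ∀ k, (fSlice A k - fSlice (tprod (tprod U S) (tT V)) k) * fSlice V k = 0
  topR : ∀ k, ∀ r : Fin R,
    matSpecNorm (fSlice A k - fSlice (tprod (tprod U S) (tT V)) k) ≤ (fSlice S k r r).re

end RTPCA

open RTPCA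

/-!
Everything is checked one Fourier slice at a time: the DFT along the third mode turns the
t-product, the tensor transpose and the identity tensor into the matrix product, the conjugate
transpose and the identity matrix, and `Σ⋆^{1/2}` into the diagonal matrix `S = diag (√σᵢ)`.
On a slice put `G = S Q_k⁻¹ (Q_{k+1} - Q_k) S`, `E = (L Q_k - U S) S` and
`E₁ = (L Q_{k+1} - U S) S`; then `U G = E₁ - E - E S⁻² G`. As `U` has orthonormal columns and
`‖S⁻¹‖² ≤ 1 / σ_min`, this gives `‖G‖ ≤ 2 ε σ_min + ε ‖G‖`. The bound for the right factor is
the same argument with `Q` replaced by `Q^{-ᵀ}`.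
-/

open Complex ComplexConjugate
open scoped Real Matrix.Norms.L2Operator

namespace RTPCA

variable {I₁ I₂ I₃ J R : ℕ}

noncomputable def expFrac (n : ℕ) (c : ℤ) : ℂ := exp (2 * π * I / n) ^ c

section ExpFrac

variable {n : ℕ}

lemma exp_eq_expFrac (c : ℤ) : exp (2 * π * I * c / n) = expFrac n c := by
  rw [expFrac, ← exp_int_mul]
  ring_nf

lemma expFrac_add (a b : ℤ) : expFrac n (a + b) = expFrac n a * expFrac n b :=
  zpow_add₀ (exp_ne_zero _) a b

lemma expFrac_pow (c : ℤ) (t : ℕ) : expFrac n c ^ t = expFrac n (c * t) := by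
  rw [expFrac, expFrac, _root_.zpow_mul, zpow_natCast]

lemma expFrac_eq_one_iff (hn : n ≠ 0) (c : ℤ) : expFrac n c = 1 ↔ (n : ℤ) ∣ c :=
  (isPrimitiveRoot_exp n hn).zpow_eq_one_iff_dvd c

lemma expFrac_eq_of_modEq (hn : n ≠ 0) {a b : ℤ} (h : a ≡ b [ZMOD n]) :
    expFrac n a = expFrac n b := by
  have hab : expFrac n (a - b) = 1 := (expFrac_eq_one_iff hn _).mpr h.symm.dvd
  rw [← sub_add_cancel a b, expFrac_add, hab, one_mul]

lemma conj_expFrac (c : ℤ) : conj (expFrac n c) = expFrac n (-c) := by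
  rw [expFrac, expFrac, map_zpow₀, ← exp_conj, _root_.zpow_neg, ← _root_.inv_zpow, ← exp_neg]
  congr 2
  simp [map_div₀, neg_div, map_ofNat]

lemma sum_expFrac_mul_of_not_dvd (hn : n ≠ 0) {c : ℤ} (hc : ¬ (n : ℤ) ∣ c) :
    ∑ t : Fin n, expFrac n (c * t) = 0 := by
  have hne : expFrac n c ≠ 1 := fun h => hc ((expFrac_eq_one_iff hn c).mp h)
  have hpow : expFrac n c ^ n = 1 := by
    rw [expFrac_pow, expFrac_eq_one_iff hn]
    exact dvd_mul_left _ _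
  simp_rw [← expFrac_pow]
  rw [Fin.sum_univ_eq_sum_range (expFrac n c ^ ·), geom_sum_eq hne, hpow, sub_self, zero_div]

lemma sum_expFrac_sub_mul (k m : Fin n) :
    ∑ t : Fin n, expFrac n (((k : ℤ) - m) * t) = if k = m then (n : ℂ) else 0 := by
  have hn : n ≠ 0 := k.pos.ne'
  split_ifs with hkm
  · simp [hkm, expFrac]
  · refine sum_expFrac_mul_of_not_dvd hn fun hdvd => hkm (Fin.ext ?_)
    have hlt : |(k : ℤ) - m| < n := by rw [abs_lt]; omega
    have := Int.eq_zero_of_abs_lt_dvd hdvd hlt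
    omega

lemma intCast_val_add_modEq (s u : Fin n) : ((s + u : Fin n) : ℤ) ≡ s + u [ZMOD n] := by
  rw [Fin.val_add, Int.natCast_mod, Nat.cast_add]
  exact Int.mod_modEq _ _

lemma intCast_val_neg_modEq [NeZero n] (s : Fin n) : ((-s : Fin n) : ℤ) ≡ -s [ZMOD n] := by
  have h := intCast_val_add_modEq (-s) s
  rw [neg_add_cancel, Fin.val_zero, Nat.cast_zero] at h
  exact Int.ModEq.add_right_cancel' (s : ℤ) (by simpa using h.symm)

end ExpFrac

lemma expFrac_mul_val_add (c : ℤ) (s u : Fin I₃) :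
    expFrac I₃ (c * (s + u : Fin I₃)) = expFrac I₃ (c * s) * expFrac I₃ (c * u) := by
  rw [← expFrac_add, ← mul_add]
  exact expFrac_eq_of_modEq s.pos.ne' ((intCast_val_add_modEq s u).mul_left c)

lemma expFrac_mul_val_neg (c : ℤ) (s : Fin I₃) :
    expFrac I₃ (c * (-s : Fin I₃)) = expFrac I₃ (-(c * s)) := by
  have : NeZero I₃ := ⟨s.pos.ne'⟩
  rw [← mul_neg]
  exact expFrac_eq_of_modEq s.pos.ne' ((intCast_val_neg_modEq s).mul_left c)

lemma dft_eq_sum_expFrac (A : Tensor I₁ I₂ I₃) (i : Fin I₁) (j : Fin I₂) (k : Fin I₃) :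
    dft A i j k = ∑ t : Fin I₃, (A i j t : ℂ) * expFrac I₃ (-k * t) := by
  refine Finset.sum_congr rfl fun t _ => ?_
  rw [← exp_eq_expFrac]
  congr 2
  push_cast
  ring

lemma fSlice_sub (A B : Tensor I₁ I₂ I₃) (k : Fin I₃) :
    fSlice (A - B) k = fSlice A k - fSlice B k := by
  ext i j
  simp only [fSlice, dft, of_apply, Matrix.sub_apply, Pi.sub_apply, ofReal_sub, sub_mul,
    Finset.sum_sub_distrib]

lemma fSlice_tprod (A : Tensor I₁ I₂ I₃) (B : Tensor I₂ J I₃) (k : Fin I₃) :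
    fSlice (tprod A B) k = fSlice A k * fSlice B k := by
  have : NeZero I₃ := ⟨k.pos.ne'⟩
  ext i j
  simp only [fSlice, of_apply, mul_apply, dft_eq_sum_expFrac, tprod, ofReal_sum, ofReal_mul,
    Finset.sum_mul, Finset.mul_sum]
  rw [Finset.sum_comm]
  refine Finset.sum_congr rfl fun l _ => ?_
  rw [Finset.sum_comm]
  conv_rhs => rw [Finset.sum_comm]
  refine Finset.sum_congr rfl fun s _ => ?_
  rw [← Equiv.sum_comp (Equiv.addLeft s)]
  refine Finset.sum_congr rfl fun u _ => ?_
  rw [Equiv.coe_addLeft, add_sub_cancel_left, expFrac_mul_val_add]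
  ring

lemma fSlice_tT (A : Tensor I₁ I₂ I₃) (k : Fin I₃) : fSlice (tT A) k = (fSlice A k)ᴴ := by
  have : NeZero I₃ := ⟨k.pos.ne'⟩
  ext j i
  simp only [fSlice, of_apply, conjTranspose_apply, dft_eq_sum_expFrac, tT, star_sum, star_mul',
    Complex.star_def, conj_ofReal, conj_expFrac]
  rw [← Equiv.sum_comp (Equiv.neg (Fin I₃))]
  refine Finset.sum_congr rfl fun u _ => ?_
  rw [Equiv.neg_apply, neg_neg, expFrac_mul_val_neg, neg_mul]

lemma fSlice_idT (k : Fin I₃) : fSlice (idT R I₃) k = 1 := by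
  have : NeZero I₃ := ⟨k.pos.ne'⟩
  ext i j
  rw [fSlice, of_apply, dft_eq_sum_expFrac, Finset.sum_eq_single 0]
  · by_cases h : i = j <;> simp [idT, h, expFrac, one_apply]
  · intro t _ ht
    simp [idT, Fin.val_ne_zero_iff.mpr ht]
  · simp

lemma dft_neg (A : Tensor I₁ I₂ I₃) (i : Fin I₁) (j : Fin I₂) (k : Fin I₃) :
    dft A i j (-k) = conj (dft A i j k) := by
  have : NeZero I₃ := ⟨k.pos.ne'⟩
  simp only [dft_eq_sum_expFrac, map_sum, map_mul, conj_ofReal, conj_expFrac]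
  refine Finset.sum_congr rfl fun t _ => congrArg _ (expFrac_eq_of_modEq k.pos.ne' ?_)
  rw [neg_mul]
  exact ((intCast_val_neg_modEq k).mul_right _).neg

section Inversion

variable {F : Fin I₁ → Fin I₂ → Fin I₃ → ℂ}

lemma ofReal_invDft (hre : ∀ i j k, (F i j k).im = 0) (hev : ∀ i j k, F i j (-k) = F i j k)
    (i : Fin I₁) (j : Fin I₂) (t : Fin I₃) :
    (invDft F i j t : ℂ) = (∑ k, F i j k * expFrac I₃ (k * t)) / I₃ := by
  have : NeZero I₃ := ⟨t.pos.ne'⟩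
  set z := ∑ k, F i j k * expFrac I₃ (k * t)
  have hz : ∑ k : Fin I₃, F i j k * exp (2 * π * I * k * t / I₃) = z := by
    refine Finset.sum_congr rfl fun k _ => ?_
    rw [← exp_eq_expFrac]
    push_cast
    ring_nf
  -- `z` is real because conjugation permutes its terms via `k ↦ -k`.
  have hconj : conj z = z := by
    simp only [z, map_sum, map_mul, conj_expFrac, conj_eq_iff_im.mpr (hre i j _)]
    rw [← Equiv.sum_comp (Equiv.neg (Fin I₃))]
    refine Finset.sum_congr rfl fun k _ => ?_
    rw [Equiv.neg_apply, hev, expFrac_eq_of_modEq t.pos.ne' ?_]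
    simpa using ((intCast_val_neg_modEq k).mul_right (t : ℤ)).neg
  rw [invDft, hz]
  exact conj_eq_iff_re.mp (by simp [hconj])

lemma dft_invDft (hre : ∀ i j k, (F i j k).im = 0) (hev : ∀ i j k, F i j (-k) = F i j k)
    (i : Fin I₁) (j : Fin I₂) (m : Fin I₃) : dft (invDft F) i j m = F i j m := by
  have hn : (I₃ : ℂ) ≠ 0 := Nat.cast_ne_zero.mpr m.pos.ne'
  calc dft (invDft F) i j m
      = (∑ k, F i j k * ∑ t : Fin I₃, expFrac I₃ (((k : ℤ) - m) * t)) / I₃ := by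
        simp only [dft_eq_sum_expFrac, ofReal_invDft hre hev, Finset.sum_div, Finset.sum_mul,
          Finset.mul_sum]
        rw [Finset.sum_comm]
        refine Finset.sum_congr rfl fun k _ => Finset.sum_congr rfl fun t _ => ?_
        rw [sub_mul, sub_eq_add_neg, expFrac_add, ← neg_mul]
        ring
    _ = F i j m := by
        simp only [sum_expFrac_sub_mul, mul_ite, mul_zero, Finset.sum_ite_eq', Finset.mem_univ,
          if_true]
        field_simp

lemma fSlice_sqrtT (S : Tensor R R I₃) (k : Fin I₃) (i j : Fin R) :
    fSlice (sqrtT S) k i j = (√(dft S i j k).re : ℂ) :=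
  dft_invDft (fun _ _ _ => ofReal_im _)
    (fun i j k => by rw [dft_neg, conj_re]) i j k

lemma fSlice_sqrtT_of_fDiagPos {S : Tensor R R I₃} (hS : FDiagPos S) (k : Fin I₃) :
    fSlice (sqrtT S) k = diagonal fun i => (√(fSlice S k i i).re : ℂ) := by
  ext i j
  rw [fSlice_sqrtT, diagonal_apply]
  split_ifs with h
  · rw [h]; rfl
  · simp [show dft S i j k = 0 from hS.1 k i j h]

end Inversion

section L2OpNorm

variable {𝕜 : Type*} [RCLike 𝕜] {m n r : Type*} [Fintype m] [Fintype n] [Fintype r]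
  [DecidableEq n] [DecidableEq r]

lemma l2_opNorm_mul_of_conjTranspose_mul_eq_one {U : Matrix m r 𝕜} (hU : Uᴴ * U = 1)
    (M : Matrix r n 𝕜) : ‖U * M‖ = ‖M‖ := by
  have h : ‖U * M‖ * ‖U * M‖ = ‖M‖ * ‖M‖ := by
    rw [← l2_opNorm_conjTranspose_mul_self, ← l2_opNorm_conjTranspose_mul_self,
      conjTranspose_mul, Matrix.mul_assoc, ← Matrix.mul_assoc Uᴴ, hU, Matrix.one_mul]
  exact (mul_self_inj (norm_nonneg _) (norm_nonneg _)).mp h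

lemma mul_l2_opNorm_diagonal_inv_sq_le {s : r → 𝕜} {σ : ℝ} (hs : ∀ i, σ ≤ ‖s i‖ ^ 2) :
    σ * ‖diagonal s⁻¹‖ ^ 2 ≤ 1 := by
  rcases le_or_gt σ 0 with hσ | hσ
  · nlinarith [sq_nonneg ‖diagonal s⁻¹‖]
  have hinv : ‖s⁻¹‖ ≤ (√σ)⁻¹ := by
    refine (pi_norm_le_iff_of_nonneg (by positivity)).mpr fun i => ?_
    rw [Pi.inv_apply, norm_inv]
    refine inv_anti₀ (Real.sqrt_pos.mpr hσ) ?_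
    simpa using Real.sqrt_le_sqrt (hs i)
  calc σ * ‖diagonal s⁻¹‖ ^ 2 ≤ σ * ((√σ)⁻¹) ^ 2 := by
        rw [l2_opNorm_diagonal]; gcongr
    _ = 1 := by rw [inv_pow, Real.sq_sqrt hσ.le, mul_inv_cancel₀ hσ.ne']

end L2OpNorm

section AlignmentChange

variable {𝕜 : Type*} [RCLike 𝕜] {m r : Type*} [Fintype m] [Fintype r] [DecidableEq r]
  {U L : Matrix m r 𝕜} {K Ki K₁ : Matrix r r 𝕜}

lemma l2_opNorm_alignment_change_le {S T : Matrix r r 𝕜} (hU : Uᴴ * U = 1) (hK : K * Ki = 1)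
    (hST : S * T = 1) (hTS : T * S = 1) :
    ‖S * Ki * (K₁ - K) * S‖ ≤ ‖(L * K₁ - U * S) * S‖ + ‖(L * K - U * S) * S‖
      + ‖(L * K - U * S) * S‖ * ‖T‖ ^ 2 * ‖S * Ki * (K₁ - K) * S‖ := by
  set G := S * Ki * (K₁ - K) * S
  set E := (L * K - U * S) * S
  set E₁ := (L * K₁ - U * S) * S
  have cancel (A B X : Matrix r r 𝕜) (hAB : A * B = 1) : A * (B * X) = X := by
    rw [← Matrix.mul_assoc, hAB, Matrix.one_mul]
  have hUG : U * G = E₁ - E - E * (T * T) * G := by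
    simp only [G, E, E₁, Matrix.sub_mul, Matrix.mul_sub, Matrix.mul_assoc, cancel S T _ hST,
      cancel T S _ hTS, cancel K Ki _ hK]
    abel
  calc ‖G‖ = ‖U * G‖ := (l2_opNorm_mul_of_conjTranspose_mul_eq_one hU G).symm
    _ ≤ ‖E₁‖ + ‖E‖ + ‖E‖ * ‖T‖ ^ 2 * ‖G‖ := by
      rw [hUG]
      refine (norm_sub_le _ _).trans (add_le_add (norm_sub_le _ _) ?_)
      calc ‖E * (T * T) * G‖ ≤ ‖E‖ * (‖T‖ * ‖T‖) * ‖G‖ := by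
            refine (l2_opNorm_mul _ _).trans (mul_le_mul_of_nonneg_right ?_ (norm_nonneg _))
            exact (l2_opNorm_mul _ _).trans
              (mul_le_mul_of_nonneg_left (l2_opNorm_mul _ _) (norm_nonneg _))
        _ = ‖E‖ * ‖T‖ ^ 2 * ‖G‖ := by ring

lemma l2_opNorm_diagonal_alignment_change_le {s : r → 𝕜} {σ ε : ℝ} (hs₀ : ∀ i, s i ≠ 0)
    (hs : ∀ i, σ ≤ ‖s i‖ ^ 2) (hε₀ : 0 ≤ ε) (hε₁ : ε < 1) (hU : Uᴴ * U = 1) (hK : K * Ki = 1)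
    (hE : ‖(L * K - U * diagonal s) * diagonal s‖ ≤ ε * σ)
    (hE₁ : ‖(L * K₁ - U * diagonal s) * diagonal s‖ ≤ ε * σ) :
    ‖diagonal s * Ki * (K₁ - K) * diagonal s‖ ≤ 2 * ε / (1 - ε) * σ := by
  have hST : diagonal s * diagonal s⁻¹ = 1 := by
    rw [diagonal_mul_diagonal, ← diagonal_one]
    exact congrArg diagonal (funext fun i => mul_inv_cancel₀ (hs₀ i))
  have hTS : diagonal s⁻¹ * diagonal s = 1 := by
    rw [diagonal_mul_diagonal, ← diagonal_one]
    exact congrArg diagonal (funext fun i => inv_mul_cancel₀ (hs₀ i))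
  have hbound := l2_opNorm_alignment_change_le (L := L) (K₁ := K₁) hU hK hST hTS
  have hT := mul_l2_opNorm_diagonal_inv_sq_le hs
  set g := ‖diagonal s * Ki * (K₁ - K) * diagonal s‖
  set e := ‖(L * K - U * diagonal s) * diagonal s‖
  have hcross : e * ‖diagonal s⁻¹‖ ^ 2 * g ≤ ε * g :=
    calc e * ‖diagonal s⁻¹‖ ^ 2 * g ≤ ε * σ * ‖diagonal s⁻¹‖ ^ 2 * g := by gcongr
      _ = ε * (σ * ‖diagonal s⁻¹‖ ^ 2) * g := by ring
      _ ≤ ε * 1 * g := by gcongr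
      _ = ε * g := by ring
  rw [div_mul_eq_mul_div, le_div_iff₀ (by linarith)]
  linarith

end AlignmentChange

lemma norm_fSlice_le_specNorm (A : Tensor I₁ I₂ I₃) (k : Fin I₃) : ‖fSlice A k‖ ≤ specNorm A :=
  le_ciSup (f := fun k => matSpecNorm (fSlice A k)) (Set.finite_range _).bddAbove k

lemma specNorm_le {A : Tensor I₁ I₂ I₃} {c : ℝ} (hc : 0 ≤ c) (h : ∀ k, ‖fSlice A k‖ ≤ c) :
    specNorm A ≤ c :=
  Real.iSup_le h hc

lemma fSlice_mul_fSlice_eq_one {A : Tensor R I₁ I₃} {B : Tensor I₁ R I₃}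
    (h : tprod A B = idT R I₃) (k : Fin I₃) : fSlice A k * fSlice B k = 1 := by
  rw [← fSlice_tprod, h, fSlice_idT]

lemma sigmaMin_nonneg {S : Tensor R R I₃} (hS : FDiagPos S) : 0 ≤ sigmaMin S :=
  Real.iInf_nonneg fun k => Real.iInf_nonneg fun i => (hS.2 k i).1.le

lemma sigmaMin_le (S : Tensor R R I₃) (k : Fin I₃) (i : Fin R) :
    sigmaMin S ≤ (fSlice S k i i).re :=
  (ciInf_le (Set.finite_range _).bddBelow k).trans (ciInf_le (Set.finite_range _).bddBelow i)

lemma sigmaMin_le_norm_sqrt_sq {S : Tensor R R I₃} (hS : FDiagPos S) (k : Fin I₃) (i : Fin R) :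
    sigmaMin S ≤ ‖(√(fSlice S k i i).re : ℂ)‖ ^ 2 := by
  rw [norm_real, Real.norm_of_nonneg (Real.sqrt_nonneg _), Real.sq_sqrt (hS.2 k i).1.le]
  exact sigmaMin_le S k i

lemma sqrt_diag_ne_zero {S : Tensor R R I₃} (hS : FDiagPos S) (k : Fin I₃) (i : Fin R) :
    (√(fSlice S k i i).re : ℂ) ≠ 0 :=
  ofReal_ne_zero.mpr (Real.sqrt_ne_zero'.mpr (hS.2 k i).1)

lemma specNorm_alignment_change_le {S : Tensor R R I₃} (hS : FDiagPos S)
    {U L : Tensor I₁ R I₃} {K Ki K₁ : Tensor R R I₃} (hU : tprod (tT U) U = idT R I₃)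
    (hK : ∀ j, fSlice K j * fSlice Ki j = 1) {ε : ℝ} (hε₀ : 0 ≤ ε) (hε₁ : ε < 1)
    (hE : specNorm (tprod (tprod L K - tprod U (sqrtT S)) (sqrtT S)) ≤ ε * sigmaMin S)
    (hE₁ : specNorm (tprod (tprod L K₁ - tprod U (sqrtT S)) (sqrtT S)) ≤ ε * sigmaMin S) :
    specNorm (tprod (tprod (tprod (sqrtT S) Ki) (K₁ - K)) (sqrtT S))
      ≤ 2 * ε / (1 - ε) * sigmaMin S := by
  have hc : 0 ≤ 2 * ε / (1 - ε) * sigmaMin S := by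
    have := sub_pos.mpr hε₁
    have := sigmaMin_nonneg hS
    positivity
  refine specNorm_le hc fun j => ?_
  have hEj := (norm_fSlice_le_specNorm _ j).trans hE
  have hE₁j := (norm_fSlice_le_specNorm _ j).trans hE₁
  simp only [fSlice_tprod, fSlice_sub, fSlice_sqrtT_of_fDiagPos hS] at hEj hE₁j ⊢
  have hUj : (fSlice U j)ᴴ * fSlice U j = 1 := by
    simpa only [fSlice_tT] using fSlice_mul_fSlice_eq_one hU j
  exact l2_opNorm_diagonal_alignment_change_le (sqrt_diag_ne_zero hS j)
    (sigmaMin_le_norm_sqrt_sq hS j) hε₀ hε₁ hUj (hK j) hEj hE₁j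

end RTPCA

theorem alignment_change_bound_general
    {I₁ I₂ I₃ R : ℕ}
    (Xs : Tensor I₁ I₂ I₃) (Us : Tensor I₁ R I₃) (Sig : Tensor R R I₃) (Vs : Tensor I₂ R I₃)
    (hsvd : IsSkinnyTSVD Xs Us Sig Vs)
    (ε τ : ℝ) (hε₀ : 0 < ε) (hε₁ : ε < 1) (hτ₀ : 0 < τ) (hτ₁ : τ ≤ 1) (k : ℕ)
    (Lk1 : Tensor I₁ R I₃) (Rk1 : Tensor I₂ R I₃)
    (Qk Qki Qk1 Qk1i : Tensor R R I₃)
    (hQk : TInv Qk Qki)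
    (hbk : max (specNorm (tprod (tprod Lk1 Qk - tprod Us (sqrtT Sig)) (sqrtT Sig)))
               (specNorm (tprod (tprod Rk1 (tT Qki) - tprod Vs (sqrtT Sig)) (sqrtT Sig)))
             ≤ ε * τ ^ (k + 1) * sigmaMin Sig)
    (hbk1 : max (specNorm (tprod (tprod Lk1 Qk1 - tprod Us (sqrtT Sig)) (sqrtT Sig)))
                (specNorm (tprod (tprod Rk1 (tT Qk1i) - tprod Vs (sqrtT Sig)) (sqrtT Sig)))
             ≤ ε * τ ^ (k + 1) * sigmaMin Sig) :
    max (specNorm (tprod (tprod (tprod (sqrtT Sig) Qki) (Qk1 - Qk)) (sqrtT Sig)))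
        (specNorm (tprod (tprod (tprod (sqrtT Sig) (tT Qk)) (tT Qk1i - tT Qki)) (sqrtT Sig)))
      ≤ 2 * ε / (1 - ε) * sigmaMin Sig := by
  have hτ : ε * τ ^ (k + 1) * sigmaMin Sig ≤ ε * sigmaMin Sig :=
    mul_le_mul_of_nonneg_right (mul_le_of_le_one_right hε₀.le (pow_le_one₀ hτ₀.le hτ₁))
      (sigmaMin_nonneg hsvd.diag)
  obtain ⟨hL, hR⟩ := max_le_iff.mp (hbk.trans hτ)
  obtain ⟨hL₁, hR₁⟩ := max_le_iff.mp (hbk1.trans hτ)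
  have hK := fSlice_mul_fSlice_eq_one hQk.1
  have hKT (j : Fin I₃) : fSlice (tT Qki) j * fSlice (tT Qk) j = 1 := by
    rw [fSlice_tT, fSlice_tT, ← conjTranspose_mul, hK j, conjTranspose_one]
  exact max_le
    (specNorm_alignment_change_le hsvd.diag hsvd.orthU hK hε₀.le hε₁ hL hL₁)
    (specNorm_alignment_change_le hsvd.diag hsvd.orthV hKT hε₀.le hε₁ hR hR₁)

/-- bound on the change of the alignment tensor. -/
theorem alignment_change_bound
    {I₁ I₂ I₃ R : ℕ}
    (Xs : Tensor I₁ I₂ I₃) (Us : Tensor I₁ R I₃) (Sig : Tensor R R I₃) (Vs : Tensor I₂ R I₃)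
    (hsvd : IsSkinnyTSVD Xs Us Sig Vs)
    (ε τ : ℝ) (hε₀ : 0 < ε) (hε₁ : ε < 1) (hτ₀ : 0 < τ) (hτ₁ : τ ≤ 1) (k : ℕ)
    (Lk1 : Tensor I₁ R I₃) (Rk1 : Tensor I₂ R I₃)
    (Qk Qki Qk1 Qk1i : Tensor R R I₃)
    (hQk : TInv Qk Qki)
    (hQk1 : IsOptAlign Lk1 (tprod Us (sqrtT Sig)) Rk1 (tprod Vs (sqrtT Sig)) (sqrtT Sig) Qk1 Qk1i)
    (hbk : max (specNorm (tprod (tprod Lk1 Qk - tprod Us (sqrtT Sig)) (sqrtT Sig)))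
               (specNorm (tprod (tprod Rk1 (tT Qki) - tprod Vs (sqrtT Sig)) (sqrtT Sig)))
             ≤ ε * τ ^ (k + 1) * sigmaMin Sig)
    (hbk1 : max (specNorm (tprod (tprod Lk1 Qk1 - tprod Us (sqrtT Sig)) (sqrtT Sig)))
                (specNorm (tprod (tprod Rk1 (tT Qk1i) - tprod Vs (sqrtT Sig)) (sqrtT Sig)))
             ≤ ε * τ ^ (k + 1) * sigmaMin Sig) :
    max (specNorm (tprod (tprod (tprod (sqrtT Sig) Qki) (Qk1 - Qk)) (sqrtT Sig)))
        (specNorm (tprod (tprod (tprod (sqrtT Sig) (tT Qk)) (tT Qk1i - tT Qki)) (sqrtT Sig)))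
      ≤ 2 * ε / (1 - ε) * sigmaMin Sig :=
  alignment_change_bound_general Xs Us Sig Vs hsvd ε τ hε₀ hε₁ hτ₀ hτ₁ k Lk1 Rk1 Qk Qki Qk1 Qk1i hQk
    hbk hbk1
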